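/- Let φ: Ω → ℝ be measurable and Φ: Ω → X be strongly measurable and first-type Birkhoff integrable with respect to ν, and define the vector measure N(A) := (Bi₁)∫_A Φ dν. Then the product function ω ↦ φ(ω)Φ(ω) is first-type Birkhoff integrable with respect to ν if and only if φ is second-type Birkhoff integrable with respect to N, and in that case (Bi₁)∫_Ω φ(ω)Φ(ω) dν = (Bi₂)∫_Ω φ dN. -/

import Mathlib

open MeasureTheory Filter Set Function

noncomputable section

variable {Ω : Type*} {X : Type*}

/-- A countable measurable partition of a measurable set `G`:
a countable family of pairwise disjoint measurable sets covering `G`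
(pieces may be empty, which accounts for finite or countable families). -/
structure CountablePartitionOn [MeasurableSpace Ω] (G : Set Ω) where
  piece : ℕ → Set Ω
  measurable : ∀ n, MeasurableSet (piece n)
  disj : Pairwise (Function.onFun Disjoint piece)
  cover : (⋃ n, piece n) = G

/-- `P` is finer than `P'` if every piece of `P` is contained in some piece of `P'`. -/
def CountablePartitionOn.Finer [MeasurableSpace Ω] {G : Set Ω}
    (P P' : CountablePartitionOn G) : Prop :=
  ∀ n, ∃ m, P.piece n ⊆ P'.piece m

/-- A choice of tags for a partition: a point in each nonempty piece. -/
def CountablePartitionOn.IsTagging [MeasurableSpace Ω] {G : Set Ω}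
    (P : CountablePartitionOn G) (t : ℕ → Ω) : Prop :=
  ∀ n, (P.piece n).Nonempty → t n ∈ P.piece n

/-- Generic Birkhoff-type integral: the Riemann-type sums `∑ term (t k) (U k)`
attached to countable measurable partitions converge to `I` in the Birkhoff sense. -/
def HasBirkhoffSumOn [MeasurableSpace Ω] [NormedAddCommGroup X]
    (term : Ω → Set Ω → X) (G : Set Ω) (I : X) : Prop :=
  ∀ ε > (0:ℝ), ∃ P : CountablePartitionOn G,
    ∀ P' : CountablePartitionOn G, P'.Finer P → ∀ t : ℕ → Ω, P'.IsTagging t →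
      Filter.limsup
        (fun n => ‖(∑ k ∈ Finset.range n, term (t k) (P'.piece k)) - I‖) Filter.atTop < ε

/-- First-type Birkhoff integral of a vector-valued function with respect to a
scalar measure, over the set `A`. -/
def HasBi1On [MeasurableSpace Ω] [NormedAddCommGroup X] [NormedSpace ℝ X]
    (ν : Measure Ω) (Φ : Ω → X) (A : Set Ω) (I : X) : Prop :=
  HasBirkhoffSumOn (fun ω U => (ν U).toReal • Φ ω) A I

/-- Second-type Birkhoff integral of a scalar function with respect to a
vector-valued set function, over the set `A`. -/
def HasBi2On [MeasurableSpace Ω] [NormedAddCommGroup X] [NormedSpace ℝ X]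
    (N : Set Ω → X) (φ : Ω → ℝ) (A : Set Ω) (I : X) : Prop :=
  HasBirkhoffSumOn (fun ω U => φ ω • N U) A I

/-!
The two kinds of Riemann sums are compared piece by piece. On a tagged piece `U` with tag `ω`,
a fine partition of `U` for `N U` turns `φ ω • ((ν U) • Φ ω - N U)` into `φ ω` times a finite
weighted sum of `Φ ω - Φ ωⱼ` with `ωⱼ ∈ U`, up to an arbitrarily small error. Tested against a
norming functional, each such weighted sum may be replaced by a single worst point `b ∈ U`.
Grouping the pieces by the level `⌊max |φ| ‖Φ‖⌋` at the tag, the resulting differences between the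
two taggings `ω` and `b` are bounded by the oscillation of the Birkhoff sums of `Φ` on that level
set, which is small on a fine partition of it. So the two Riemann sums stay uniformly close along
all refinements of one partition, and one converges exactly when the other does, to the same limit.
-/

namespace CountablePartitionOn

variable [MeasurableSpace Ω] {G H : Set Ω}

theorem Finer.refl (P : CountablePartitionOn G) : P.Finer P :=
  fun n => ⟨n, subset_rfl⟩

theorem Finer.trans {P Q R : CountablePartitionOn G} (hPQ : P.Finer Q) (hQR : Q.Finer R) :
    P.Finer R := fun n =>
  let ⟨m, hm⟩ := hPQ n
  let ⟨l, hl⟩ := hQR m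
  ⟨l, hm.trans hl⟩

theorem piece_subset (P : CountablePartitionOn G) (n : ℕ) : P.piece n ⊆ G :=
  (subset_iUnion P.piece n).trans P.cover.subset

theorem hasSum_measure_toReal (P : CountablePartitionOn G) (ν : Measure Ω) [IsFiniteMeasure ν] :
    HasSum (fun n => (ν (P.piece n)).toReal) (ν G).toReal := by
  have h : ∑' n, ν (P.piece n) = ν G := by rw [← measure_iUnion P.disj P.measurable, P.cover]
  have hfin : ∑' n, ν (P.piece n) ≠ ⊤ := h ▸ measure_ne_top ν G
  rw [← h, ENNReal.tsum_toReal_eq fun n => measure_ne_top ν _]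
  exact ENNReal.hasSum_toReal hfin

def restrict (P : CountablePartitionOn G) (hH : MeasurableSet H) (hHG : H ⊆ G) :
    CountablePartitionOn H where
  piece n := P.piece n ∩ H
  measurable n := (P.measurable n).inter hH
  disj _ _ hab := (P.disj hab).mono inter_subset_left inter_subset_left
  cover := by rw [← iUnion_inter, P.cover, inter_eq_right.2 hHG]

def glue (P : CountablePartitionOn G) (Q : ∀ m, CountablePartitionOn (P.piece m)) :
    CountablePartitionOn G where
  piece n := (Q n.unpair.1).piece n.unpair.2
  measurable n := (Q _).measurable _
  disj a b hab := by
    dsimp only [onFun]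
    by_cases h : a.unpair.1 = b.unpair.1
    · have h' : a.unpair.2 ≠ b.unpair.2 := fun h' =>
        hab (by rw [← Nat.pair_unpair a, ← Nat.pair_unpair b, h, h'])
      rw [h]
      exact (Q _).disj h'
    · exact (P.disj h).mono ((Q _).piece_subset _) ((Q _).piece_subset _)
  cover := by
    simp only [Set.iUnion_unpair fun i j => (Q i).piece j, CountablePartitionOn.cover, P.cover]

theorem glue_finer (P : CountablePartitionOn G) (Q : ∀ m, CountablePartitionOn (P.piece m)) :
    (P.glue Q).Finer P :=
  fun n => ⟨n.unpair.1, (Q _).piece_subset _⟩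

theorem restrict_finer_of_finer_glue {P : CountablePartitionOn G}
    {Q : ∀ m, CountablePartitionOn (P.piece m)} {P' : CountablePartitionOn G}
    (hP' : P'.Finer (P.glue Q)) (m : ℕ) :
    (P'.restrict (P.measurable m) (P.piece_subset m)).Finer (Q m) := by
  intro k
  obtain ⟨i, hi⟩ := hP' k
  by_cases h : i.unpair.1 = m
  · subst h
    exact ⟨i.unpair.2, inter_subset_left.trans hi⟩
  · refine ⟨0, fun ω hω => absurd hω.2 ?_⟩
    exact disjoint_left.1 (P.disj h) ((Q _).piece_subset _ (hi hω.1))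

def inter (P Q : CountablePartitionOn G) : CountablePartitionOn G :=
  P.glue fun m => Q.restrict (P.measurable m) (P.piece_subset m)

theorem inter_finer_left (P Q : CountablePartitionOn G) : (P.inter Q).Finer P :=
  P.glue_finer _

theorem inter_finer_right (P Q : CountablePartitionOn G) : (P.inter Q).Finer Q :=
  fun n => ⟨n.unpair.2, inter_subset_left⟩

def fibers (h : Ω → ℕ) (hh : Measurable h) : CountablePartitionOn (univ : Set Ω) where
  piece q := h ⁻¹' {q}
  measurable q := hh (measurableSet_singleton q)
  disj _ _ hab := disjoint_left.2 fun _ ha hb => hab (ha.symm.trans hb)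
  cover := eq_univ_of_forall fun ω => mem_iUnion.2 ⟨h ω, rfl⟩

section Fibers

variable {h : Ω → ℕ} {hh : Measurable h}
  {P : CountablePartitionOn (univ : Set Ω)} {t : ℕ → Ω}

theorem piece_subset_fiber (hP : P.Finer (fibers h hh)) (ht : P.IsTagging t) {k : ℕ}
    (hk : (P.piece k).Nonempty) : P.piece k ⊆ h ⁻¹' {h (t k)} := by
  obtain ⟨q, hq⟩ := hP k
  rwa [show h (t k) = q from hq (ht k hk)]

theorem IsTagging.restrict_fibers (hP : P.Finer (fibers h hh)) (ht : P.IsTagging t) (q : ℕ) :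
    (P.restrict ((fibers h hh).measurable q) (subset_univ _)).IsTagging t := by
  rintro k ⟨ω, hωk, hωq⟩
  refine ⟨ht k ⟨ω, hωk⟩, ?_⟩
  have hω : h ω = h (t k) := piece_subset_fiber hP ht ⟨ω, hωk⟩ hωk
  exact hω.symm.trans hωq

theorem restrict_fibers_piece (hP : P.Finer (fibers h hh)) (ht : P.IsTagging t) {k q : ℕ}
    (hq : h (t k) = q) :
    (P.restrict ((fibers h hh).measurable q) (subset_univ _)).piece k = P.piece k := by
  rcases (P.piece k).eq_empty_or_nonempty with hk | hk
  · simp [restrict, hk]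
  · exact inter_eq_left.2 (hq ▸ piece_subset_fiber hP ht hk)

end Fibers

end CountablePartitionOn

open CountablePartitionOn

section Birkhoff

variable [MeasurableSpace Ω] [NormedAddCommGroup X] {G : Set Ω}

def BirkhoffFine (term : Ω → Set Ω → X) (J : X) (δ : ℝ) (P : CountablePartitionOn G) : Prop :=
  ∀ P' : CountablePartitionOn G, P'.Finer P → ∀ t : ℕ → Ω, P'.IsTagging t →
    ∀ᶠ n in atTop, ‖∑ k ∈ Finset.range n, term (t k) (P'.piece k) - J‖ < δ

def BirkhoffSumsClose (term₁ term₂ : Ω → Set Ω → X) (G : Set Ω) : Prop :=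
  ∀ ε > (0 : ℝ), ∃ P : CountablePartitionOn G,
    ∀ P' : CountablePartitionOn G, P'.Finer P → ∀ t : ℕ → Ω, P'.IsTagging t → ∀ n,
      ‖∑ k ∈ Finset.range n, term₁ (t k) (P'.piece k)
        - ∑ k ∈ Finset.range n, term₂ (t k) (P'.piece k)‖ ≤ ε

variable {term term₁ term₂ : Ω → Set Ω → X}

theorem BirkhoffSumsClose.symm (h : BirkhoffSumsClose term₁ term₂ G) :
    BirkhoffSumsClose term₂ term₁ G := fun ε hε =>
  let ⟨P, hP⟩ := h ε hε
  ⟨P, fun P' hP' t ht n => by rw [norm_sub_rev]; exact hP P' hP' t ht n⟩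

/-- Retag by `a` on `F` and by `b` elsewhere, and compare both sums with `J`. -/
theorem BirkhoffFine.norm_sum_sub_le {J : X} {δ : ℝ} {P P' : CountablePartitionOn G}
    (hP : BirkhoffFine term J δ P) (hP' : P'.Finer P) {a b : ℕ → Ω} (ha : P'.IsTagging a)
    (hb : P'.IsTagging b) (F : Finset ℕ) :
    ‖∑ k ∈ F, (term (a k) (P'.piece k) - term (b k) (P'.piece k))‖ ≤ 2 * δ := by
  classical
  set c := F.piecewise a b
  have hc : P'.IsTagging c := fun k hk => by
    by_cases hkF : k ∈ F
    · simpa [c, hkF] using ha k hk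
    · simpa [c, hkF] using hb k hk
  obtain ⟨N, hN⟩ := F.exists_nat_subset_range
  obtain ⟨n, hcn, hbn, hFn⟩ := ((hP P' hP' c hc).and ((hP P' hP' b hb).and
    (eventually_ge_atTop N))).exists
  have hsum : ∑ k ∈ F, (term (a k) (P'.piece k) - term (b k) (P'.piece k))
      = (∑ k ∈ Finset.range n, term (c k) (P'.piece k) - J)
        - (∑ k ∈ Finset.range n, term (b k) (P'.piece k) - J) := by
    rw [sub_sub_sub_cancel_right, ← Finset.sum_sub_distrib]
    calc _ = ∑ k ∈ F, (term (c k) (P'.piece k) - term (b k) (P'.piece k)) :=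
          Finset.sum_congr rfl fun k hk => by simp [c, hk]
      _ = _ := Finset.sum_subset (hN.trans (Finset.range_mono hFn)) fun k _ hk => by simp [c, hk]
  rw [hsum]
  linarith [norm_sub_le (∑ k ∈ Finset.range n, term (c k) (P'.piece k) - J)
    (∑ k ∈ Finset.range n, term (b k) (P'.piece k) - J)]

theorem BirkhoffFine.sum_abs_sub_le [NormedSpace ℝ X] {J : X} {δ : ℝ}
    {P P' : CountablePartitionOn G} (hP : BirkhoffFine term J δ P) (hP' : P'.Finer P)
    {a b : ℕ → Ω} (ha : P'.IsTagging a) (hb : P'.IsTagging b) (g : StrongDual ℝ X)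
    (hg : ‖g‖ ≤ 1) (F : Finset ℕ) :
    ∑ k ∈ F, |g (term (a k) (P'.piece k)) - g (term (b k) (P'.piece k))| ≤ 2 * δ := by
  classical
  -- orient each pair of tags so that every difference `g (term a') - g (term b')` is `≥ 0`
  set up : ℕ → Prop := fun k => g (term (b k) (P'.piece k)) ≤ g (term (a k) (P'.piece k))
  set a' : ℕ → Ω := fun k => if up k then a k else b k
  set b' : ℕ → Ω := fun k => if up k then b k else a k
  have ha' : P'.IsTagging a' := fun k hk => by
    by_cases hu : up k <;> simp [a', hu, ha k hk, hb k hk]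
  have hb' : P'.IsTagging b' := fun k hk => by
    by_cases hu : up k <;> simp [b', hu, ha k hk, hb k hk]
  have habs : ∀ k, |g (term (a k) (P'.piece k)) - g (term (b k) (P'.piece k))|
      = g (term (a' k) (P'.piece k) - term (b' k) (P'.piece k)) := fun k => by
    by_cases hu : up k
    · simp only [a', b', hu, if_true, map_sub]
      exact abs_of_nonneg (sub_nonneg.2 hu)
    · simp only [a', b', hu, if_false, map_sub]
      rw [abs_sub_comm]
      exact abs_of_nonneg (sub_nonneg.2 (not_le.1 hu).le)
  calc ∑ k ∈ F, |g (term (a k) (P'.piece k)) - g (term (b k) (P'.piece k))|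
      = g (∑ k ∈ F, (term (a' k) (P'.piece k) - term (b' k) (P'.piece k))) := by
        simp only [habs, map_sum]
    _ ≤ ‖g‖ * ‖∑ k ∈ F, (term (a' k) (P'.piece k) - term (b' k) (P'.piece k))‖ :=
        (le_abs_self _).trans (g.le_opNorm _)
    _ ≤ 2 * δ :=
        (mul_le_of_le_one_left (norm_nonneg _) hg).trans (hP.norm_sum_sub_le hP' ha' hb' F)

end Birkhoff

section Bi1

variable [MeasurableSpace Ω] [NormedAddCommGroup X] [NormedSpace ℝ X] {ν : Measure Ω}
  {Φ : Ω → X} {H : Set Ω} {J : X}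

theorem norm_sum_measure_smul_le [IsFiniteMeasure ν] {P : CountablePartitionOn H} {t : ℕ → Ω}
    (ht : P.IsTagging t) {C : ℝ} (hC0 : 0 ≤ C) (hC : ∀ ω ∈ H, ‖Φ ω‖ ≤ C) (n : ℕ) :
    ‖∑ k ∈ Finset.range n, (ν (P.piece k)).toReal • Φ (t k)‖ ≤ C * ν.real univ := by
  calc _ ≤ ∑ k ∈ Finset.range n, ‖(ν (P.piece k)).toReal • Φ (t k)‖ := norm_sum_le _ _
    _ ≤ ∑ k ∈ Finset.range n, C * ν.real (P.piece k) := Finset.sum_le_sum fun k _ => by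
        rw [norm_smul, Real.norm_of_nonneg ENNReal.toReal_nonneg, mul_comm]
        rcases (P.piece k).eq_empty_or_nonempty with hk | hk
        · simp [hk]
        · exact mul_le_mul_of_nonneg_right (hC _ (P.piece_subset k (ht k hk)))
            ENNReal.toReal_nonneg
    _ = C * ∑ k ∈ Finset.range n, ν.real (P.piece k) := (Finset.mul_sum _ _ _).symm
    _ ≤ C * ν.real univ := mul_le_mul_of_nonneg_left (sum_measureReal_le_measureReal_univ
        (fun k _ => P.measurable k) fun _ _ _ _ hij => P.disj hij) hC0

/-- Boundedness of `Φ` makes the `limsup` in `HasBi1On` an honest one (in `ℝ` it is `0` for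
sequences unbounded above). -/
theorem HasBi1On.exists_birkhoffFine [IsFiniteMeasure ν] (h : HasBi1On ν Φ H J)
    (hb : Bornology.IsBounded (Φ '' H)) {δ : ℝ} (hδ : 0 < δ) :
    ∃ P : CountablePartitionOn H, BirkhoffFine (fun ω U => (ν U).toReal • Φ ω) J δ P := by
  obtain ⟨C, hC0, hC⟩ := hb.exists_pos_norm_le
  obtain ⟨P, hP⟩ := h δ hδ
  refine ⟨P, fun P' hP' t ht => eventually_lt_of_limsup_lt (hP P' hP' t ht)
    (isBoundedUnder_of ⟨C * ν.real univ + ‖J‖, fun n => ?_⟩)⟩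
  refine (norm_sub_le _ _).trans ?_
  gcongr
  exact norm_sum_measure_smul_le ht hC0.le (fun ω hω => hC _ (mem_image_of_mem Φ hω)) n

theorem HasBi1On.exists_finite_sample [IsFiniteMeasure ν] (h : HasBi1On ν Φ H J)
    (hb : Bornology.IsBounded (Φ '' H)) {η : ℝ} (hη : 0 < η) (x : Ω) :
    ∃ (m : ℕ) (w : ℕ → ℝ) (s : ℕ → Ω), (∀ j, 0 ≤ w j) ∧ (∀ j, s j ∈ insert x H) ∧
      ∑ j ∈ Finset.range m, w j ≤ (ν H).toReal ∧
      ‖(ν H).toReal • Φ x - J - ∑ j ∈ Finset.range m, w j • (Φ x - Φ (s j))‖ ≤ η := by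
  classical
  set η' := η / (‖Φ x‖ + 1)
  obtain ⟨R, hR⟩ := h.exists_birkhoffFine hb (show 0 < η' by positivity)
  set s : ℕ → Ω := fun j => if hj : (R.piece j).Nonempty then hj.some else x
  have hs : R.IsTagging s := fun j hj => by simp only [s, dif_pos hj]; exact hj.some_mem
  have hsH : ∀ j, s j ∈ insert x H := fun j => by
    by_cases hj : (R.piece j).Nonempty
    · exact Or.inr (R.piece_subset j (hs j hj))
    · simp [s, hj]
  set w : ℕ → ℝ := fun j => (ν (R.piece j)).toReal
  have hw : HasSum w (ν H).toReal := R.hasSum_measure_toReal ν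
  obtain ⟨m, hmJ, hmν⟩ := ((hR R (Finer.refl R) s hs).and
    (hw.tendsto_sum_nat.eventually (lt_mem_nhds (sub_lt_self _ (by positivity : 0 < η'))))).exists
  have hsum : ∑ j ∈ Finset.range m, w j ≤ (ν H).toReal :=
    sum_le_hasSum _ (fun j _ => ENNReal.toReal_nonneg) hw
  refine ⟨m, w, s, fun j => ENNReal.toReal_nonneg, hsH, hsum, ?_⟩
  have hsplit : (ν H).toReal • Φ x - J - ∑ j ∈ Finset.range m, w j • (Φ x - Φ (s j))
      = ((ν H).toReal - ∑ j ∈ Finset.range m, w j) • Φ x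
        + (∑ j ∈ Finset.range m, w j • Φ (s j) - J) := by
    simp only [smul_sub, Finset.sum_sub_distrib, ← Finset.sum_smul, sub_smul]
    abel
  calc _ ≤ ((ν H).toReal - ∑ j ∈ Finset.range m, w j) * ‖Φ x‖
        + ‖∑ j ∈ Finset.range m, w j • Φ (s j) - J‖ := by
        rw [hsplit]
        refine (norm_add_le _ _).trans (le_of_eq ?_)
        rw [norm_smul, Real.norm_of_nonneg (sub_nonneg.2 hsum)]
    _ ≤ η' * ‖Φ x‖ + η' :=
        add_le_add (mul_le_mul_of_nonneg_right (by linarith) (norm_nonneg _)) hmJ.le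
    _ = η := by
        simp only [η']
        field_simp

end Bi1

theorem exists_abs_sum_mul_sub_le (f : Ω → ℝ) {S : Set Ω} {x : Ω} (hx : x ∈ S) {s : ℕ → Ω}
    (hs : ∀ j, s j ∈ S) {w : ℕ → ℝ} (hw : ∀ j, 0 ≤ w j) (m : ℕ) :
    ∃ b ∈ S, |∑ j ∈ Finset.range m, w j * (f x - f (s j))|
      ≤ (∑ j ∈ Finset.range m, w j) * |f x - f b| := by
  rcases m.eq_zero_or_pos with rfl | hm
  · exact ⟨x, hx, by simp⟩
  obtain ⟨i, -, hi⟩ := Finset.exists_max_image (Finset.range m) (fun j => |f x - f (s j)|)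
    ⟨0, Finset.mem_range.2 hm⟩
  refine ⟨s i, hs i, ?_⟩
  calc _ ≤ ∑ j ∈ Finset.range m, |w j * (f x - f (s j))| := Finset.abs_sum_le_sum_abs _ _
    _ ≤ ∑ j ∈ Finset.range m, w j * |f x - f (s i)| := Finset.sum_le_sum fun j hj => by
        rw [abs_mul, abs_of_nonneg (hw j)]
        exact mul_le_mul_of_nonneg_left (hi j hj) (hw j)
    _ = _ := (Finset.sum_mul _ _ _).symm

section Levels

variable [MeasurableSpace Ω] [NormedAddCommGroup X] [NormedSpace ℝ X] {ν : Measure Ω}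
  {Φ : Ω → X} {h : Ω → ℕ} {hh : Measurable h}
  {Q : ∀ q, CountablePartitionOn ((fibers h hh).piece q)}
  {P : CountablePartitionOn (univ : Set Ω)} {t : ℕ → Ω}

theorem sum_measure_mul_abs_sub_le_of_fiber {q : ℕ} {J : X} {δ : ℝ}
    (hQ : BirkhoffFine (fun ω U => (ν U).toReal • Φ ω) J δ (Q q))
    (hP : P.Finer ((fibers h hh).glue Q)) (ht : P.IsTagging t) {b : ℕ → Ω} (hb : P.IsTagging b)
    (g : StrongDual ℝ X) (hg : ‖g‖ ≤ 1) {F : Finset ℕ} (hF : ∀ k ∈ F, h (t k) = q) :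
    ∑ k ∈ F, (ν (P.piece k)).toReal * |g (Φ (t k)) - g (Φ (b k))| ≤ 2 * δ := by
  have hPL := hP.trans (glue_finer _ _)
  refine le_of_eq_of_le (Finset.sum_congr rfl fun k hk => ?_)
    (hQ.sum_abs_sub_le (restrict_finer_of_finer_glue hP q) (ht.restrict_fibers hPL q)
      (hb.restrict_fibers hPL q) g hg F)
  rw [restrict_fibers_piece hPL ht (hF k hk), map_smul, map_smul, smul_eq_mul, smul_eq_mul,
    ← mul_sub, abs_mul, abs_of_nonneg ENNReal.toReal_nonneg]

/-- Test against a norming functional and replace each weighted average of `Φ (s k j)` by an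
extreme tag `b k`; the levels then separate into the fine partitions `Q q`. -/
theorem norm_sum_smul_sum_smul_sub_le {J : ℕ → X} {δ : ℕ → ℝ}
    (hQ : ∀ q, BirkhoffFine (fun ω U => (ν U).toReal • Φ ω) (J q) (δ q) (Q q))
    {φ : Ω → ℝ} (hφ : ∀ ω, |φ ω| ≤ h ω + 1) (hP : P.Finer ((fibers h hh).glue Q))
    (ht : P.IsTagging t) (n : ℕ) {m : ℕ → ℕ} {w : ℕ → ℕ → ℝ} {s : ℕ → ℕ → Ω}
    (hw : ∀ k j, 0 ≤ w k j) (hs : ∀ k j, s k j ∈ insert (t k) (P.piece k))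
    (hsum : ∀ k, ∑ j ∈ Finset.range (m k), w k j ≤ (ν (P.piece k)).toReal) :
    ‖∑ k ∈ Finset.range n, φ (t k) • ∑ j ∈ Finset.range (m k), w k j • (Φ (t k) - Φ (s k j))‖
      ≤ ∑ q ∈ (Finset.range n).image (h ∘ t), (q + 1) * (2 * δ q) := by
  set Z := ∑ k ∈ Finset.range n, φ (t k) • ∑ j ∈ Finset.range (m k), w k j • (Φ (t k) - Φ (s k j))
  obtain ⟨g, hg, hgZ⟩ := exists_dual_vector'' ℝ Z
  set f : Ω → ℝ := fun ω => g (Φ ω)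
  choose b hbP hb using fun k =>
    exists_abs_sum_mul_sub_le f (mem_insert (t k) (P.piece k)) (hs k) (hw k) (m k)
  have hbt : P.IsTagging b := fun k hk => (hbP k).elim (fun hbk => hbk ▸ ht k hk) id
  calc ‖Z‖ = g Z := hgZ.symm
    _ = ∑ k ∈ Finset.range n,
          φ (t k) * ∑ j ∈ Finset.range (m k), w k j * (f (t k) - f (s k j)) := by
        simp [Z, f, map_sum, map_smul, map_sub]
    _ ≤ ∑ k ∈ Finset.range n, |φ (t k)| * ((ν (P.piece k)).toReal * |f (t k) - f (b k)|) :=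
        Finset.sum_le_sum fun k _ => (le_abs_self _).trans <| by
          rw [abs_mul]
          exact mul_le_mul_of_nonneg_left
            ((hb k).trans (mul_le_mul_of_nonneg_right (hsum k) (abs_nonneg _))) (abs_nonneg _)
    _ = ∑ q ∈ (Finset.range n).image (h ∘ t), ∑ k ∈ Finset.range n with h (t k) = q,
          |φ (t k)| * ((ν (P.piece k)).toReal * |f (t k) - f (b k)|) :=
        (Finset.sum_fiberwise_of_maps_to (fun k hk => Finset.mem_image_of_mem _ hk) _).symm
    _ ≤ ∑ q ∈ (Finset.range n).image (h ∘ t), (q + 1) * ∑ k ∈ Finset.range n with h (t k) = q,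
          (ν (P.piece k)).toReal * |f (t k) - f (b k)| := Finset.sum_le_sum fun q _ => by
        rw [Finset.mul_sum]
        refine Finset.sum_le_sum fun k hk => mul_le_mul_of_nonneg_right ?_ (by positivity)
        exact (hφ _).trans (by rw [(Finset.mem_filter.1 hk).2])
    _ ≤ ∑ q ∈ (Finset.range n).image (h ∘ t), (q + 1) * (2 * δ q) :=
        Finset.sum_le_sum fun q _ => mul_le_mul_of_nonneg_left
          (sum_measure_mul_abs_sub_le_of_fiber (hQ q) hP ht hbt g hg
            fun k hk => (Finset.mem_filter.1 hk).2) (by positivity)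

theorem norm_sum_measure_smul_sub_sum_smul_le {J : ℕ → X} {δ : ℕ → ℝ}
    (hQ : ∀ q, BirkhoffFine (fun ω U => (ν U).toReal • Φ ω) (J q) (δ q) (Q q))
    {φ : Ω → ℝ} (hφ : ∀ ω, |φ ω| ≤ h ω + 1) (hP : P.Finer ((fibers h hh).glue Q))
    (ht : P.IsTagging t) (n : ℕ) {N : Set Ω → X} {m : ℕ → ℕ} {w : ℕ → ℕ → ℝ}
    {s : ℕ → ℕ → Ω} (hw : ∀ k j, 0 ≤ w k j) (hs : ∀ k j, s k j ∈ insert (t k) (P.piece k))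
    (hsum : ∀ k, ∑ j ∈ Finset.range (m k), w k j ≤ (ν (P.piece k)).toReal) {η : ℕ → ℝ}
    (happrox : ∀ k, ‖(ν (P.piece k)).toReal • Φ (t k) - N (P.piece k)
      - ∑ j ∈ Finset.range (m k), w k j • (Φ (t k) - Φ (s k j))‖ ≤ η k) :
    ‖∑ k ∈ Finset.range n, (ν (P.piece k)).toReal • (φ (t k) • Φ (t k))
        - ∑ k ∈ Finset.range n, φ (t k) • N (P.piece k)‖
      ≤ ∑ q ∈ (Finset.range n).image (h ∘ t), (q + 1) * (2 * δ q)
        + ∑ k ∈ Finset.range n, |φ (t k)| * η k := by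
  set M : ℕ → X := fun k => ∑ j ∈ Finset.range (m k), w k j • (Φ (t k) - Φ (s k j))
  calc _ = ‖∑ k ∈ Finset.range n, φ (t k) • M k + ∑ k ∈ Finset.range n,
        φ (t k) • ((ν (P.piece k)).toReal • Φ (t k) - N (P.piece k) - M k)‖ := by
        rw [← Finset.sum_add_distrib, ← Finset.sum_sub_distrib]
        congr 1
        refine Finset.sum_congr rfl fun k _ => ?_
        rw [← smul_add, add_sub_cancel, smul_sub, smul_comm]
    _ ≤ ‖∑ k ∈ Finset.range n, φ (t k) • M k‖ + ∑ k ∈ Finset.range n,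
        ‖φ (t k) • ((ν (P.piece k)).toReal • Φ (t k) - N (P.piece k) - M k)‖ :=
        (norm_add_le _ _).trans (add_le_add_right (norm_sum_le _ _) _)
    _ ≤ _ := by
        refine add_le_add (norm_sum_smul_sum_smul_sub_le hQ hφ hP ht n hw hs hsum)
          (Finset.sum_le_sum fun k _ => ?_)
        rw [norm_smul, Real.norm_eq_abs]
        exact mul_le_mul_of_nonneg_left (happrox k) (abs_nonneg _)

end Levels

theorem birkhoffSumsClose_of_hasBi1On [MeasurableSpace Ω] [NormedAddCommGroup X]
    [NormedSpace ℝ X] {ν : Measure Ω} [IsFiniteMeasure ν] {φ : Ω → ℝ} (hφ : Measurable φ)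
    {Φ : Ω → X} (hΦ : StronglyMeasurable Φ) {N : Set Ω → X}
    (hN : ∀ A : Set Ω, MeasurableSet A → HasBi1On ν Φ A (N A)) :
    BirkhoffSumsClose (fun ω U => (ν U).toReal • (φ ω • Φ ω)) (fun ω U => φ ω • N U) univ := by
  intro ε hε
  set h : Ω → ℕ := fun ω => ⌊max |φ ω| ‖Φ ω‖⌋₊
  have hh : Measurable h := (hφ.abs.max hΦ.norm.measurable).nat_floor
  have hbound : ∀ ω, max |φ ω| ‖Φ ω‖ ≤ h ω + 1 := fun ω => (Nat.lt_floor_add_one _).le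
  have hLb : ∀ q, Bornology.IsBounded (Φ '' (fibers h hh).piece q) := fun q =>
    isBounded_iff_forall_norm_le.2 ⟨q + 1, by
      rintro _ ⟨ω, hω : h ω = q, rfl⟩
      exact hω ▸ (le_max_right _ _).trans (hbound ω)⟩
  set δ : ℕ → ℝ := fun q => ε / (2 ^ (q + 3) * (q + 1))
  choose Q hQ using fun q => (hN _ ((fibers h hh).measurable q)).exists_birkhoffFine (hLb q)
    (show 0 < δ q by positivity)
  refine ⟨(fibers h hh).glue Q, fun P hP t ht n => ?_⟩
  have hPb : ∀ k, Bornology.IsBounded (Φ '' P.piece k) := fun k =>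
    let ⟨_, hi⟩ := hP k
    (hLb _).subset (image_mono (hi.trans ((Q _).piece_subset _)))
  set η : ℕ → ℝ := fun k => ε / (2 * (n + 1)) / (|φ (t k)| + 1)
  choose m w s hw hs hsum happrox using fun k =>
    (hN _ (P.measurable k)).exists_finite_sample (hPb k) (show 0 < η k by positivity) (t k)
  refine (norm_sum_measure_smul_sub_sum_smul_le hQ (fun ω => (le_max_left _ _).trans (hbound ω))
    hP ht n hw hs hsum happrox).trans ?_
  have hlevels : ∑ q ∈ (Finset.range n).image (h ∘ t), ((q : ℝ) + 1) * (2 * δ q) ≤ ε / 2 := by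
    have hδ : ∀ q : ℕ, ((q : ℝ) + 1) * (2 * δ q) = ε / 4 * (1 / 2) ^ q := fun q => by
      simp only [δ, one_div, inv_pow]
      field_simp
      ring
    simp only [hδ, ← Finset.mul_sum]
    calc _ ≤ ε / 4 * ∑' q : ℕ, ((1 : ℝ) / 2) ^ q := by
          gcongr
          exact summable_geometric_two.sum_le_tsum _ fun _ _ => by positivity
      _ = ε / 2 := by rw [tsum_geometric_two]; ring
  have hpieces : ∑ k ∈ Finset.range n, |φ (t k)| * η k ≤ ε / 2 := by
    calc _ ≤ ∑ _k ∈ Finset.range n, ε / (2 * (n + 1)) := Finset.sum_le_sum fun k _ => by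
          calc |φ (t k)| * η k ≤ (|φ (t k)| + 1) * η k := by gcongr; linarith
            _ = ε / (2 * (n + 1)) := mul_div_cancel₀ _ (by positivity)
      _ = n * ε / (2 * (n + 1)) := by simp [mul_div_assoc]
      _ ≤ ε / 2 := by
          rw [div_le_div_iff₀ (by positivity) two_pos]
          nlinarith
  linarith

/-- In `ℝ`, `limsup` is `0` (a junk value) for sequences unbounded above, so the comparison is
made on the defining sets: a bound `a` on `u` gives the bound `a + δ` on `v`. -/
theorem limsup_le_limsup_add_of_abs_sub_le {u v : ℕ → ℝ} {δ : ℝ} (hδ : 0 ≤ δ)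
    (hv : ∀ n, 0 ≤ v n) (h : ∀ n, |u n - v n| ≤ δ) :
    limsup v atTop ≤ limsup u atTop + δ := by
  rw [limsup_eq, limsup_eq]
  have hshift : ∀ a, (∀ᶠ n in atTop, u n ≤ a) → ∀ᶠ n in atTop, v n ≤ a + δ := fun a ha => by
    filter_upwards [ha] with n hn
    linarith [abs_le.1 (h n)]
  rcases Set.eq_empty_or_nonempty {a : ℝ | ∀ᶠ n in atTop, u n ≤ a} with hu | hu
  · have hv' : {a : ℝ | ∀ᶠ n in atTop, v n ≤ a} = ∅ := eq_empty_of_forall_notMem fun a ha =>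
      (eq_empty_iff_forall_notMem.1 hu) (a + δ) (by
        filter_upwards [ha] with n hn
        linarith [abs_le.1 (h n)])
    rw [hu, hv', Real.sInf_empty, zero_add]
    exact hδ
  · have hbdd : BddBelow {a : ℝ | ∀ᶠ n in atTop, v n ≤ a} :=
      ⟨0, fun a ha => let ⟨n, hn⟩ := ha.exists; (hv n).trans hn⟩
    rw [← sub_le_iff_le_add]
    exact le_csInf hu fun a ha => sub_le_iff_le_add.2 (csInf_le hbdd (hshift a ha))

variable [MeasurableSpace Ω] [NormedAddCommGroup X] in
theorem HasBirkhoffSumOn.of_birkhoffSumsClose {term₁ term₂ : Ω → Set Ω → X} {G : Set Ω} {I : X}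
    (h : BirkhoffSumsClose term₁ term₂ G) (h₁ : HasBirkhoffSumOn term₁ G I) :
    HasBirkhoffSumOn term₂ G I := by
  intro ε hε
  obtain ⟨P₁, hP₁⟩ := h₁ (ε / 2) (by positivity)
  obtain ⟨P, hP⟩ := h (ε / 2) (by positivity)
  refine ⟨P₁.inter P, fun P' hP' t ht => ?_⟩
  have hclose : ∀ n, |‖∑ k ∈ Finset.range n, term₁ (t k) (P'.piece k) - I‖
      - ‖∑ k ∈ Finset.range n, term₂ (t k) (P'.piece k) - I‖| ≤ ε / 2 := fun n => by
    refine (abs_norm_sub_norm_le _ _).trans ?_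
    rw [sub_sub_sub_cancel_right]
    exact hP P' (hP'.trans (P₁.inter_finer_right P)) t ht n
  calc _ ≤ _ := limsup_le_limsup_add_of_abs_sub_le (by positivity) (fun n => norm_nonneg _) hclose
    _ < ε := by linarith [hP₁ P' (hP'.trans (P₁.inter_finer_left P)) t ht]

theorem bi1_product_iff_bi2_general
    [MeasurableSpace Ω] [NormedAddCommGroup X] [NormedSpace ℝ X]
    (ν : Measure Ω) [IsFiniteMeasure ν]
    (φ : Ω → ℝ) (hφ : Measurable φ)
    (Φ : Ω → X) (hΦm : StronglyMeasurable Φ)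
    (N : Set Ω → X) (hN : ∀ A : Set Ω, MeasurableSet A → HasBi1On ν Φ A (N A)) :
    ∀ I : X, HasBi1On ν (fun ω => φ ω • Φ ω) Set.univ I ↔ HasBi2On N φ Set.univ I := by
  have h := birkhoffSumsClose_of_hasBi1On hφ hΦm hN
  exact fun I => ⟨HasBirkhoffSumOn.of_birkhoffSumsClose h,
    HasBirkhoffSumOn.of_birkhoffSumsClose h.symm⟩

/-- Theorem 2.7 of the paper. Let `φ : Ω → ℝ` be measurable and
`Φ : Ω → X` strongly measurable and first-type Birkhoff integrable w.r.t. `ν`, with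
indefinite integral `N A = (Bi₁)∫_A Φ dν`.  Then `φ • Φ` is first-type Birkhoff
integrable w.r.t. `ν` iff `φ` is second-type Birkhoff integrable w.r.t. `N`, and
the two integrals coincide (i.e. they have exactly the same Birkhoff integrals). -/
theorem bi1_product_iff_bi2
    [MeasurableSpace Ω] [NormedAddCommGroup X] [NormedSpace ℝ X]
    (ν : Measure Ω) [IsFiniteMeasure ν]
    (φ : Ω → ℝ) (hφ : Measurable φ)
    (Φ : Ω → X) (hΦm : StronglyMeasurable Φ)
    (hΦi : ∃ I, HasBi1On ν Φ Set.univ I)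
    (N : Set Ω → X) (hN : ∀ A : Set Ω, MeasurableSet A → HasBi1On ν Φ A (N A)) :
    ∀ I : X, HasBi1On ν (fun ω => φ ω • Φ ω) Set.univ I ↔ HasBi2On N φ Set.univ I :=
  bi1_product_iff_bi2_general ν φ hφ Φ hΦm N hN
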